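/- arXiv:cs/9911003 — 3 statements merged into one kernel-verified Lean document; each statement's English description precedes it below -/
import Mathlib

section
/- Let H be a finite simple graph with vertex set V(H), let L be a finite set with |L| = s, and let x and y be two distinct elements not in L. Consider the functions B : V(H) → L ∪ {x, y} such that (i) for each z ∈ L at most one vertex of H is mapped to z, and (ii) every connected component of the subgraph of H induced by the vertices not mapped into L is mapped constantly (all its vertices go to x, or all go to y). Then the number of such functions B is at most (|V(H)| + 1)^s · 2^{K_s(H)}, where K_s(H) denotes the maximum, over all sets X ⊆ V(H) with |X| ≤ s, of the number of connected components of the subgraph of H induced by V(H) ∖ X. -/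
/-!
Call `B` admissible if it satisfies (i) and (ii). An admissible `B` is determined by its partial
inverse on `L`, a map `L → Option V(H)` with at most `(|V(H)| + 1)^s` possible values, together
with the choice of `x` or `y` on each component of `H - B⁻¹(L)`. Since `|B⁻¹(L)| ≤ s`, there are
at most `K_s(H)` such components, so each value of the partial inverse is shared by at most
`2^{K_s(H)}` admissible maps.
-/

open Function

namespace Set

variable {α β : Type*}

theorem ncard_le_card_mul_of_fiber_le [Fintype β] (S : Set α) (f : α → β) (n : ℕ)
    (h : ∀ a ∈ S, {a' ∈ S | f a' = f a}.ncard ≤ n) : S.ncard ≤ Fintype.card β * n := by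
  have hfiber (b : β) : {a ∈ S | f a = b}.ncard ≤ n := by
    rcases eq_empty_or_nonempty {a ∈ S | f a = b} with he | ⟨a, ha, rfl⟩
    · simp [he]
    · exact h a ha
  calc S.ncard = (⋃ b, {a ∈ S | f a = b}).ncard := by congr 1; ext a; simp
    _ ≤ ∑ b, {a ∈ S | f a = b}.ncard := ncard_iUnion_le_of_fintype _
    _ ≤ ∑ _b : β, n := Finset.sum_le_sum fun b _ => hfiber b
    _ = Fintype.card β * n := by simp

end Set

theorem Function.partialInv_eq_some_iff {α β : Type*} {f : α → β} {b : β}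
    (h : ∀ a₁ a₂, f a₁ = b → f a₂ = b → a₁ = a₂) {a : α} :
    partialInv f b = some a ↔ f a = b := by
  by_cases hb : ∃ a, f a = b
  · rw [partialInv, dif_pos hb, Option.some_inj]
    exact ⟨fun ha => ha ▸ hb.choose_spec, h _ _ hb.choose_spec⟩
  · rw [partialInv, dif_neg hb]
    exact ⟨nofun, fun ha => (hb ⟨a, ha⟩).elim⟩

namespace SimpleGraph

variable {V W β : Type*}

theorem injOn_decide_apply_out (G : SimpleGraph V) [DecidableEq β] (x y : β) :
    Set.InjOn (fun (f : V → β) (c : G.ConnectedComponent) => decide (f c.out = x))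
      {f | (∀ v, f v = x ∨ f v = y) ∧ ∀ u v, G.Reachable u v → f u = f v} := by
  rintro f ⟨hf, hf_const⟩ g ⟨hg, hg_const⟩ hfg
  funext v
  set c := G.connectedComponentMk v
  have hv : G.Reachable c.out v := ConnectedComponent.exact c.out_eq
  have hc := congrFun hfg c
  rw [← hf_const _ _ hv, ← hg_const _ _ hv]
  rcases hf c.out with h₁ | h₁ <;> rcases hg c.out with h₂ | h₂ <;> simp_all

/-- `K_s(H)` of the paper. -/
noncomputable def maxComponentsAfterDeletion (H : SimpleGraph V) (s : ℕ) : ℕ :=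
  sSup {n : ℕ | ∃ X : Set V, X.ncard ≤ s ∧ n = Nat.card (H.induce Xᶜ).ConnectedComponent}

theorem card_connectedComponent_induce_compl_le_maxComponentsAfterDeletion [Finite V]
    (H : SimpleGraph V) {s : ℕ} {X : Set V} (hX : X.ncard ≤ s) :
    Nat.card (H.induce Xᶜ).ConnectedComponent ≤ H.maxComponentsAfterDeletion s := by
  refine le_csSup ⟨Nat.card V, ?_⟩ ⟨X, hX, rfl⟩
  rintro _ ⟨Y, -, rfl⟩
  calc Nat.card (H.induce Yᶜ).ConnectedComponent ≤ Nat.card ↥Yᶜ :=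
        Nat.card_le_card_of_surjective _ Quot.mk_surjective
    _ ≤ Nat.card V := Nat.card_le_card_of_injective _ Subtype.val_injective

variable (H : SimpleGraph V) (L : Finset W) (x y : W)

structure IsAdmissible (B : V → W) : Prop where
  mem : ∀ v, B v ∈ (L : Set W) ∪ {x, y}
  eq_of_apply_eq : ∀ z ∈ L, ∀ v₁ v₂, B v₁ = z → B v₂ = z → v₁ = v₂
  apply_eq_of_reachable : ∀ v₁ v₂ : ↥{v | B v ∉ L},
    (H.induce {v | B v ∉ L}).Reachable v₁ v₂ → B v₁ = B v₂

variable {H L x y} {B B' : V → W}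

namespace IsAdmissible

theorem ncard_preimage_le (hB : IsAdmissible H L x y B) : {v | B v ∈ L}.ncard ≤ L.card := by
  rw [← Set.ncard_coe_finset]
  exact Set.ncard_le_ncard_of_injOn B (fun _ hv => hv)
    fun v₁ h₁ v₂ _ he => hB.eq_of_apply_eq _ h₁ v₁ v₂ rfl he.symm

theorem apply_eq_of_partialInv_eq (hB : IsAdmissible H L x y B) (hB' : IsAdmissible H L x y B')
    (h : (L : Set W).domRestrict (partialInv B) = (L : Set W).domRestrict (partialInv B'))
    {v : V} (hv : B' v ∈ L) : B v = B' v := by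
  have hinv : partialInv B (B' v) = some v :=
    (congrFun h ⟨B' v, hv⟩).trans <|
      (partialInv_eq_some_iff (hB'.eq_of_apply_eq _ hv)).2 rfl
  exact (partialInv_eq_some_iff (hB.eq_of_apply_eq _ hv)).1 hinv

theorem setOf_apply_notMem_eq (hB : IsAdmissible H L x y B) (hB' : IsAdmissible H L x y B')
    (h : (L : Set W).domRestrict (partialInv B) = (L : Set W).domRestrict (partialInv B')) :
    {v | B v ∉ L} = {v | B' v ∉ L} := by
  ext v
  refine not_congr ⟨fun hv => ?_, fun hv => ?_⟩
  · rwa [hB'.apply_eq_of_partialInv_eq hB h.symm hv]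
  · rwa [hB.apply_eq_of_partialInv_eq hB' h hv]

theorem ncard_fiber_le [Finite V] (hB₀ : IsAdmissible H L x y B) :
    {B' | IsAdmissible H L x y B' ∧
      (L : Set W).domRestrict (partialInv B') = (L : Set W).domRestrict (partialInv B)}.ncard ≤
      2 ^ Nat.card (H.induce {v | B v ∉ L}).ConnectedComponent := by
  classical
  set D := {v | B v ∉ L}
  set fiber := {B' | IsAdmissible H L x y B' ∧
      (L : Set W).domRestrict (partialInv B') = (L : Set W).domRestrict (partialInv B)}
  let restrictD : (V → W) → D → W := fun B' v => B' v
  have hmaps : Set.MapsTo restrictD fiber {f | (∀ v, f v = x ∨ f v = y) ∧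
      ∀ u v, (H.induce D).Reachable u v → f u = f v} := by
    rintro B' ⟨hB', hinv⟩
    have hD := hB'.setOf_apply_notMem_eq hB₀ hinv
    refine ⟨fun v => ?_, fun u v huv => ?_⟩
    · have hv : B' v ∉ L := (Set.ext_iff.1 hD v).2 v.2
      simpa [hv] using hB'.mem v
    · have := hB'.apply_eq_of_reachable
      rw [hD] at this
      exact this u v huv
  have hinj : Set.InjOn restrictD fiber := by
    rintro B₁ ⟨hB₁, hinv₁⟩ B₂ ⟨hB₂, hinv₂⟩ h
    funext v
    by_cases hv : v ∈ D
    · exact congrFun h ⟨v, hv⟩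
    · rw [hB₁.apply_eq_of_partialInv_eq hB₀ hinv₁ (not_not.1 hv),
        hB₂.apply_eq_of_partialInv_eq hB₀ hinv₂ (not_not.1 hv)]
  calc fiber.ncard = (_ '' fiber).ncard :=
        ((injOn_decide_apply_out _ x y).comp hinj hmaps).ncard_image.symm
    _ ≤ Nat.card ((H.induce D).ConnectedComponent → Bool) := Set.ncard_le_card _
    _ = 2 ^ Nat.card (H.induce D).ConnectedComponent := by simp [Nat.card_fun]

end IsAdmissible

end SimpleGraph

theorem stmt_5_general {VH W : Type} [Fintype VH]
    (H : SimpleGraph VH) (L : Finset W) (s : ℕ) (hs : L.card = s)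
    (x y : W) :
    Set.ncard {B : VH → W |
      (∀ v : VH, B v ∈ (L : Set W) ∪ {x, y}) ∧
      (∀ z ∈ L, ∀ v₁ v₂ : VH, B v₁ = z → B v₂ = z → v₁ = v₂) ∧
      (∀ v₁ v₂ : ↥{v : VH | B v ∉ L},
        (H.induce {v : VH | B v ∉ L}).Reachable v₁ v₂ → B ↑v₁ = B ↑v₂)} ≤
    (Fintype.card VH + 1) ^ s *
      2 ^ sSup {n : ℕ | ∃ X : Set VH, X.ncard ≤ s ∧
        n = Nat.card (H.induce Xᶜ).ConnectedComponent} := by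
  classical
  have hS : {B : VH → W | _ ∧ _ ∧ _} = {B | SimpleGraph.IsAdmissible H L x y B} :=
    Set.ext fun B => ⟨fun ⟨h₁, h₂, h₃⟩ => ⟨h₁, h₂, h₃⟩, fun ⟨h₁, h₂, h₃⟩ => ⟨h₁, h₂, h₃⟩⟩
  rw [hS]
  calc _ ≤ Fintype.card (↥(L : Set W) → Option VH) * 2 ^ H.maxComponentsAfterDeletion s :=
        Set.ncard_le_card_mul_of_fiber_le _
          (fun B => (L : Set W).domRestrict (partialInv B)) _
          fun B hB => hB.ncard_fiber_le.trans <| Nat.pow_le_pow_right two_pos <|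
            H.card_connectedComponent_induce_compl_le_maxComponentsAfterDeletion
              (hs ▸ hB.ncard_preimage_le)
    _ = _ := by simp [hs, SimpleGraph.maxComponentsAfterDeletion]

/-- Let `H` be a finite simple graph, `L` a finite set of size `s`, and `x ≠ y` two
elements not in `L`.  The number of functions `B : V(H) → L ∪ {x, y}` that are injective
on the preimage of `L` and constant on each connected component of the subgraph of `H`
induced by the vertices not mapped into `L` is at most
`(|V(H)| + 1)^s * 2^(K_s(H))`, where `K_s(H)` is the maximum number of connected
components of an induced subgraph of `H` obtained by deleting at most `s` vertices. -/
theorem stmt_5 {VH W : Type} [Fintype VH] [Fintype W] [DecidableEq W]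
    (H : SimpleGraph VH) (L : Finset W) (s : ℕ) (hs : L.card = s)
    (x y : W) (hxy : x ≠ y) (hx : x ∉ L) (hy : y ∉ L) :
    Set.ncard {B : VH → W |
      (∀ v : VH, B v ∈ (L : Set W) ∪ {x, y}) ∧
      (∀ z ∈ L, ∀ v₁ v₂ : VH, B v₁ = z → B v₂ = z → v₁ = v₂) ∧
      (∀ v₁ v₂ : ↥{v : VH | B v ∉ L},
        (H.induce {v : VH | B v ∉ L}).Reachable v₁ v₂ → B ↑v₁ = B ↑v₂)} ≤
    (Fintype.card VH + 1) ^ s *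
      2 ^ sSup {n : ℕ | ∃ X : Set VH, X.ncard ≤ s ∧
        n = Nat.card (H.induce Xᶜ).ConnectedComponent} :=
  stmt_5_general H L s hs x y
end

section
/- Let G be a finite simple graph, let S be a set of vertices of G, and let u, u′, y be vertices, each in the same connected component as the others, such that every walk in G from u to y contains a vertex of S and every walk in G from u′ to y contains a vertex of S. If dist(u,z) = dist(u′,z) for every z ∈ S, then dist(u,y) = dist(u′,y). -/
lemma aux_10 {V : Type} (G : SimpleGraph V) (S : Set V)
    (u u' y : V) (huy : G.Reachable u y) (hu'y : G.Reachable u' y)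
    (hsep : ∀ p : G.Walk u y, ∃ z ∈ p.support, z ∈ S)
    (hd : ∀ z ∈ S, G.dist u z = G.dist u' z) :
    G.dist u' y ≤ G.dist u y := by
  classical
  obtain ⟨p, hp⟩ := huy.exists_walk_length_eq_dist
  obtain ⟨z, hz, hzS⟩ := hsep p
  have h1 : G.dist u z ≤ (p.takeUntil z hz).length := SimpleGraph.dist_le _
  have h2 : G.dist z y ≤ (p.dropUntil z hz).length := SimpleGraph.dist_le _
  have h3 : (p.takeUntil z hz).length + (p.dropUntil z hz).length = p.length := by
    rw [← SimpleGraph.Walk.length_append, p.take_spec hz]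
  have hzy : G.Reachable z y := ⟨p.dropUntil z hz⟩
  have hu'z : G.Reachable u' z := hu'y.trans hzy.symm
  obtain ⟨q1, hq1⟩ := hu'z.exists_walk_length_eq_dist
  obtain ⟨q2, hq2⟩ := hzy.exists_walk_length_eq_dist
  have h4 : G.dist u' y ≤ (q1.append q2).length := SimpleGraph.dist_le _
  rw [SimpleGraph.Walk.length_append, hq1, hq2, ← hd z hzS] at h4
  omega

/-- Let `u`, `u'`, `y` be vertices of a finite simple graph `G`, all in the same
connected component, and let `S` be a set of vertices such that every walk from `u` to
`y` and every walk from `u'` to `y` contains a vertex of `S`.  If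
`dist u z = dist u' z` for every `z ∈ S`, then `dist u y = dist u' y`. -/
theorem stmt_10 {V : Type} [Fintype V] (G : SimpleGraph V) (S : Set V)
    (u u' y : V)
    (huu' : G.Reachable u u') (huy : G.Reachable u y) (hu'y : G.Reachable u' y)
    (hsep : ∀ p : G.Walk u y, ∃ z ∈ p.support, z ∈ S)
    (hsep' : ∀ p : G.Walk u' y, ∃ z ∈ p.support, z ∈ S)
    (hd : ∀ z ∈ S, G.dist u z = G.dist u' z) :
    G.dist u y = G.dist u' y := by
  exact le_antisymm (aux_10 G S u' u y hu'y huy hsep' (fun z hz => (hd z hz).symm))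
    (aux_10 G S u u' y huy hu'y hsep hd)
end

section
/- Let G be a finite simple graph that has a tree decomposition of width w. Then G has a tree decomposition of width at most w in which every node of the underlying tree has degree at most 3. -/
/-- A tree decomposition of a simple graph `G` on vertex type `V` consists of a tree `T`
(on node type `τ`) together with a label `L N ⊆ V` for each node `N`, such that every
vertex belongs to some label, both endpoints of every edge belong to a common label, and
for each vertex the set of nodes whose label contains it induces a connected subgraph
(a subtree) of `T`. -/
def IsTreeDecomposition {V τ : Type} (G : SimpleGraph V)
    (T : SimpleGraph τ) (L : τ → Set V) : Prop :=
  T.IsTree ∧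
  (∀ v : V, ∃ N : τ, v ∈ L N) ∧
  (∀ u v : V, G.Adj u v → ∃ N : τ, u ∈ L N ∧ v ∈ L N) ∧
  (∀ v : V, (T.induce {N : τ | v ∈ L N}).Connected)

/-- The width of a tree decomposition: one less than the maximum size of a label. -/
noncomputable def tdWidth {V τ : Type} (L : τ → Set V) : ℕ :=
  sSup (Set.range fun N : τ => (L N).ncard) - 1

/-!
A node `x` of degree `d ≥ 4` in the tree can be split: add a copy `x'` of `x` carrying the same
label, join it to `x`, and move all but two of the tree edges at `x` over to `x'`. This is again a
tree decomposition with the same labels, in which `x` has degree `3` and `x'` has degree `d - 1`,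
so `∑ N, (deg N - 3)` drops by one. Iterating yields a tree of maximum degree at most `3`.
-/

namespace SimpleGraph

variable {α β : Type*}

theorem Connected.of_adj_reachable_map {A : SimpleGraph α} {B : SimpleGraph β}
    (hA : A.Connected) (f : α → β) (hf : ∀ ⦃u v⦄, A.Adj u v → B.Reachable (f u) (f v))
    (hcover : ∀ b, ∃ a, B.Reachable (f a) b) : B.Connected := by
  have hreach (u v : α) : B.Reachable (f u) (f v) := by
    rw [reachable_iff_reflTransGen]
    exact Relation.ReflTransGen.lift' f
      (fun _ _ h => (reachable_iff_reflTransGen _ _).mp (hf h)) u v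
      ((reachable_iff_reflTransGen u v).mp (hA u v))
  obtain ⟨a⟩ := hA.nonempty
  refine (connected_iff_exists_forall_reachable B).mpr ⟨f a, fun b => ?_⟩
  obtain ⟨a', ha'⟩ := hcover b
  exact (hreach a a').trans ha'

theorem sum_ncard_neighborSet_eq_twice_card_edgeSet [Fintype α] (G : SimpleGraph α) :
    ∑ v, (G.neighborSet v).ncard = 2 * Nat.card G.edgeSet := by
  classical
  simp only [← Nat.card_coe_set_eq, Nat.card_eq_fintype_card, card_neighborSet_eq_degree,
    card_edgeSet, sum_degrees_eq_twice_card_edges]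

/-- The new node `none` is a copy of `x`, adjacent to `x`; the edges from `x` to `S` are moved
onto the copy. -/
def splitVertex (T : SimpleGraph α) (x : α) (S : Set α) : SimpleGraph (Option α) where
  Adj p q :=
    match p, q with
    | some u, some v => T.Adj u v ∧ ¬(u = x ∧ v ∈ S) ∧ ¬(v = x ∧ u ∈ S)
    | some u, none => u = x ∨ u ∈ S
    | none, some v => v = x ∨ v ∈ S
    | none, none => False
  symm := ⟨by
    rintro (_ | u) (_ | v) h
    exacts [h, h, h, ⟨h.1.symm, h.2.2, h.2.1⟩]⟩
  loopless := ⟨by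
    rintro (_ | u) h
    exacts [h, T.loopless.irrefl u h.1]⟩

section splitVertex

variable {T : SimpleGraph α} {x : α} {S : Set α}

@[simp] theorem splitVertex_adj_some_some {u v : α} :
    (T.splitVertex x S).Adj (some u) (some v) ↔
      T.Adj u v ∧ ¬(u = x ∧ v ∈ S) ∧ ¬(v = x ∧ u ∈ S) := Iff.rfl

@[simp] theorem splitVertex_adj_some_none {u : α} :
    (T.splitVertex x S).Adj (some u) none ↔ u = x ∨ u ∈ S := Iff.rfl

@[simp] theorem splitVertex_adj_none_some {v : α} :
    (T.splitVertex x S).Adj none (some v) ↔ v = x ∨ v ∈ S := Iff.rfl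

@[simp] theorem not_splitVertex_adj_none_none : ¬(T.splitVertex x S).Adj none none := id

theorem neighborSet_splitVertex_none :
    (T.splitVertex x S).neighborSet none = some '' insert x S := by
  ext (_ | v) <;> simp [eq_comm]

theorem neighborSet_splitVertex_some_self :
    (T.splitVertex x S).neighborSet (some x) = insert none (some '' (T.neighborSet x \ S)) := by
  ext (_ | v)
  · simp
  · simp only [mem_neighborSet, splitVertex_adj_some_some, true_and, Set.mem_insert_iff,
      reduceCtorEq, Set.mem_image, Set.mem_sdiff, Option.some.injEq, exists_eq_right, false_or]
    exact ⟨fun h => ⟨h.1, h.2.1⟩, fun h => ⟨h.1, h.2, fun hv => h.1.ne hv.1.symm⟩⟩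

theorem neighborSet_splitVertex_some_of_mem {t : α} (htx : t ≠ x) (ht : t ∈ S) :
    (T.splitVertex x S).neighborSet (some t) = insert none (some '' (T.neighborSet t \ {x})) := by
  ext (_ | v)
  · simp [ht]
  · simp [htx, ht]

theorem neighborSet_splitVertex_some_of_notMem {t : α} (htx : t ≠ x) (ht : t ∉ S) :
    (T.splitVertex x S).neighborSet (some t) = some '' T.neighborSet t := by
  ext (_ | v)
  · simp [htx, ht]
  · simp [htx, ht]

theorem ncard_neighborSet_splitVertex_none [Finite α] (hxS : x ∉ S) :
    ((T.splitVertex x S).neighborSet none).ncard = S.ncard + 1 := by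
  rw [neighborSet_splitVertex_none, Set.ncard_image_of_injective _ (Option.some_injective α),
    Set.ncard_insert_of_notMem hxS]

theorem ncard_neighborSet_splitVertex_some_self [Finite α] (hS : S ⊆ T.neighborSet x) :
    ((T.splitVertex x S).neighborSet (some x)).ncard = (T.neighborSet x).ncard - S.ncard + 1 := by
  rw [neighborSet_splitVertex_some_self, Set.ncard_insert_of_notMem (by simp),
    Set.ncard_image_of_injective _ (Option.some_injective α), Set.ncard_sdiff hS]

theorem ncard_neighborSet_splitVertex_some_of_ne [Finite α] (hS : S ⊆ T.neighborSet x) {t : α}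
    (htx : t ≠ x) :
    ((T.splitVertex x S).neighborSet (some t)).ncard = (T.neighborSet t).ncard := by
  by_cases ht : t ∈ S
  · have hxt : x ∈ T.neighborSet t := (hS ht).symm
    have hpos : 0 < (T.neighborSet t).ncard := (Set.ncard_pos (Set.toFinite _)).mpr ⟨x, hxt⟩
    rw [neighborSet_splitVertex_some_of_mem htx ht, Set.ncard_insert_of_notMem (by simp),
      Set.ncard_image_of_injective _ (Option.some_injective α),
      Set.ncard_sdiff_singleton_of_mem hxt]
    omega
  · rw [neighborSet_splitVertex_some_of_notMem htx ht,
      Set.ncard_image_of_injective _ (Option.some_injective α)]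

theorem sum_comp_ncard_neighborSet_splitVertex [Fintype α] (hS : S ⊆ T.neighborSet x)
    (g : ℕ → ℕ) :
    ∑ o, g ((T.splitVertex x S).neighborSet o).ncard + g (T.neighborSet x).ncard =
      ∑ t, g (T.neighborSet t).ncard + g (S.ncard + 1) +
        g ((T.neighborSet x).ncard - S.ncard + 1) := by
  classical
  have hxS : x ∉ S := fun h => T.notMem_neighborSet_self (hS h)
  rw [Fintype.sum_option, ncard_neighborSet_splitVertex_none hxS,
    ← Finset.add_sum_erase _ _ (Finset.mem_univ x), ncard_neighborSet_splitVertex_some_self hS,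
    ← Finset.add_sum_erase _ _ (Finset.mem_univ x),
    Finset.sum_congr rfl fun t ht => by
      rw [ncard_neighborSet_splitVertex_some_of_ne hS (Finset.ne_of_mem_erase ht)]]
  ring

theorem Connected.induce_splitVertex {U : Set α} (h : (T.induce U).Connected) :
    ((T.splitVertex x S).induce {o | o.getD x ∈ U}).Connected := by
  set U' : Set (Option α) := {o | o.getD x ∈ U}
  have via_copy : ∀ {u v : α} (hu : u ∈ U) (hv : v ∈ U), x ∈ U → (u = x ∨ u ∈ S) →
      (v = x ∨ v ∈ S) →
      ((T.splitVertex x S).induce U').Reachable ⟨some u, hu⟩ ⟨some v, hv⟩ :=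
    fun hu hv hx hu' hv' =>
      (Adj.reachable (v := (⟨none, hx⟩ : U')) hu').trans
        (Adj.reachable (u := (⟨none, hx⟩ : U')) hv')
  refine h.of_adj_reachable_map (fun u => ⟨some u.1, u.2⟩) ?_ ?_
  · rintro ⟨u, hu⟩ ⟨v, hv⟩ huv
    by_cases h₁ : u = x ∧ v ∈ S
    · exact via_copy hu hv (h₁.1 ▸ hu) (Or.inl h₁.1) (Or.inr h₁.2)
    by_cases h₂ : v = x ∧ u ∈ S
    · exact via_copy hu hv (h₂.1 ▸ hv) (Or.inr h₂.2) (Or.inl h₂.1)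
    exact Adj.reachable (show (T.splitVertex x S).Adj (some u) (some v) from ⟨huv, h₁, h₂⟩)
  · rintro ⟨_ | t, ht⟩
    · exact ⟨⟨x, ht⟩,
        Adj.reachable (show (T.splitVertex x S).Adj (some x) none from Or.inl rfl)⟩
    · exact ⟨⟨t, ht⟩, Reachable.refl _⟩

theorem Connected.splitVertex (h : T.Connected) : (T.splitVertex x S).Connected := by
  have := ((induceUnivIso T).connected_iff.mpr h).induce_splitVertex (x := x) (S := S)
  rw [show {o : Option α | o.getD x ∈ Set.univ} = Set.univ from
    Set.eq_univ_of_forall fun _ => Set.mem_univ _] at this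
  exact (induceUnivIso _).connected_iff.mp this

theorem IsTree.splitVertex [Fintype α] (hT : T.IsTree) (hS : S ⊆ T.neighborSet x) :
    (T.splitVertex x S).IsTree := by
  rw [isTree_iff_connected_and_card] at hT ⊢
  refine ⟨hT.1.splitVertex, ?_⟩
  have hsum := sum_comp_ncard_neighborSet_splitVertex hS id
  have hle : S.ncard ≤ (T.neighborSet x).ncard := Set.ncard_le_ncard hS
  simp only [id, sum_ncard_neighborSet_eq_twice_card_edgeSet] at hsum
  rw [Finite.card_option, ← hT.2]
  omega

end splitVertex

end SimpleGraph

open SimpleGraph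

theorem tdWidth_comp_of_surjective {V σ τ : Type} (L : τ → Set V) {f : σ → τ}
    (hf : Function.Surjective f) : tdWidth (L ∘ f) = tdWidth L := by
  unfold tdWidth
  rw [← hf.range_comp fun N => (L N).ncard]
  rfl

theorem IsTreeDecomposition.splitVertex {V τ : Type} [Fintype τ] {G : SimpleGraph V}
    {T : SimpleGraph τ} {L : τ → Set V} (h : IsTreeDecomposition G T L) {x : τ} {S : Set τ}
    (hS : S ⊆ T.neighborSet x) :
    IsTreeDecomposition G (T.splitVertex x S) (L ∘ fun o => o.getD x) := by
  obtain ⟨htree, hcover, hedge, hsubtree⟩ := h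
  refine ⟨htree.splitVertex hS, fun v => ?_, fun u v huv => ?_, fun v => ?_⟩
  · obtain ⟨N, hN⟩ := hcover v
    exact ⟨some N, hN⟩
  · obtain ⟨N, hN⟩ := hedge u v huv
    exact ⟨some N, hN⟩
  · exact (hsubtree v).induce_splitVertex

noncomputable def degreeExcess {τ : Type*} [Fintype τ] (T : SimpleGraph τ) : ℕ :=
  ∑ N, ((T.neighborSet N).ncard - 3)

theorem degreeExcess_splitVertex_lt {τ : Type*} [Fintype τ] {T : SimpleGraph τ} {x : τ}
    {S : Set τ} (hS : S ⊆ T.neighborSet x) (hcard : S.ncard + 2 = (T.neighborSet x).ncard)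
    (hx : 4 ≤ (T.neighborSet x).ncard) : degreeExcess (T.splitVertex x S) < degreeExcess T := by
  have hsum := sum_comp_ncard_neighborSet_splitVertex hS (· - 3)
  unfold degreeExcess
  omega

theorem IsTreeDecomposition.exists_ncard_neighborSet_le_three {V τ : Type} [Fintype τ]
    {G : SimpleGraph V} {T : SimpleGraph τ} {L : τ → Set V} (h : IsTreeDecomposition G T L) :
    ∃ (τ' : Type) (_ : Fintype τ') (T' : SimpleGraph τ') (L' : τ' → Set V),
      IsTreeDecomposition G T' L' ∧ tdWidth L' = tdWidth L ∧
      ∀ N : τ', (T'.neighborSet N).ncard ≤ 3 := by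
  induction hn : degreeExcess T using Nat.strong_induction_on generalizing τ with
  | _ n ih =>
    by_cases hdeg : ∀ N, (T.neighborSet N).ncard ≤ 3
    · exact ⟨τ, inferInstance, T, L, h, rfl, hdeg⟩
    obtain ⟨x, hx⟩ := not_forall.mp hdeg
    obtain ⟨S, hS, hcard⟩ := Set.exists_subset_card_eq (s := T.neighborSet x)
      (n := (T.neighborSet x).ncard - 2) (Nat.sub_le _ _)
    obtain ⟨τ', _, T', L', h', hwidth, hdeg'⟩ := ih _
      (hn ▸ degreeExcess_splitVertex_lt hS (by omega) (by omega)) (h.splitVertex hS) rfl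
    refine ⟨τ', inferInstance, T', L', h', ?_, hdeg'⟩
    rw [hwidth, tdWidth_comp_of_surjective L fun N => ⟨some N, rfl⟩]

theorem stmt_11_general {V τ : Type} [Fintype τ]
    (G : SimpleGraph V) (T : SimpleGraph τ) (L : τ → Set V)
    (hTD : IsTreeDecomposition G T L) (w : ℕ) (hw : tdWidth L = w) :
    ∃ (τ' : Type) (_ : Fintype τ') (T' : SimpleGraph τ') (L' : τ' → Set V),
      IsTreeDecomposition G T' L' ∧ tdWidth L' ≤ w ∧
      ∀ N : τ', (T'.neighborSet N).ncard ≤ 3 := by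
  obtain ⟨τ', _, T', L', hTD', hwidth, hdeg⟩ := hTD.exists_ncard_neighborSet_le_three
  exact ⟨τ', inferInstance, T', L', hTD', (hwidth.trans hw).le, hdeg⟩

/-- If a finite simple graph `G` has a tree decomposition of width `w`, then `G` has a
tree decomposition of width at most `w` in which every node of the underlying tree has
degree at most `3`. -/
theorem stmt_11 {V τ : Type} [Fintype V] [Fintype τ]
    (G : SimpleGraph V) (T : SimpleGraph τ) (L : τ → Set V)
    (hTD : IsTreeDecomposition G T L) (w : ℕ) (hw : tdWidth L = w) :
    ∃ (τ' : Type) (_ : Fintype τ') (T' : SimpleGraph τ') (L' : τ' → Set V),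
      IsTreeDecomposition G T' L' ∧ tdWidth L' ≤ w ∧
      ∀ N : τ', (T'.neighborSet N).ncard ≤ 3 :=
  stmt_11_general G T L hTD w hw
end
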